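/- For any Hermitian positive definite Σ_int ∈ ℂ^{N×N} and h ∈ ℂ^N, we have log(1 + hᴴ Σ_int⁻¹ h) = max over u ∈ ℂ^N and ρ > 0 of [log ρ − ρ·e(u) + 1], where e(u) = uᴴ(Σ_int + h hᴴ)u − 2Re{uᴴh} + 1. -/

import Mathlib

/-!
For fixed `e > 0` the concave function `ρ ↦ log ρ - ρ e + 1` peaks at `ρ = 1 / e` with value
`-log e`, so the double maximum is `-log` of the minimal MSE. The MSE is a quadratic in `u` with
positive semidefinite matrix `A = Σ + h hᴴ`; completing the square shows it is minimised by any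
`u₀` with `A u₀ = h`, with minimum `1 - Re (u₀ᴴ h)`. By Sherman–Morrison `u₀ = (1 + s)⁻¹ Σ⁻¹ h`
with `s = hᴴ Σ⁻¹ h ≥ 0`, so the minimal MSE is `1 / (1 + s)`.
-/

open Matrix Real Set
open scoped ComplexOrder

theorem isGreatest_log_sub_mul_add_one_of_isLeast {α : Type*} {e : α → ℝ} {m : ℝ}
    (hm : IsLeast (range e) m) (hm₀ : 0 < m) :
    IsGreatest {v | ∃ u ρ, 0 < ρ ∧ v = log ρ - ρ * e u + 1} (-log m) := by
  obtain ⟨⟨u₀, hu₀⟩, hle⟩ := hm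
  refine ⟨⟨u₀, m⁻¹, inv_pos.2 hm₀, ?_⟩, ?_⟩
  · rw [hu₀, log_inv, inv_mul_cancel₀ hm₀.ne']
    ring
  · rintro _ ⟨u, ρ, hρ, rfl⟩
    have hρm : ρ * m ≤ ρ * e u := mul_le_mul_of_nonneg_left (hle ⟨u, rfl⟩) hρ.le
    have hlog := log_le_sub_one_of_pos (mul_pos hρ hm₀)
    rw [log_mul hρ.ne' hm₀.ne'] at hlog
    linarith

namespace Matrix

section Field

variable {n K : Type*} [Fintype n] [DecidableEq n] [Field K]

/-- Sherman–Morrison, applied to the vector `h`. -/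
theorem add_vecMulVec_mulVec_smul_inv_mulVec {S : Matrix n n K} (hS : IsUnit S.det) (h g : n → K)
    (hs : 1 + g ⬝ᵥ S⁻¹ *ᵥ h ≠ 0) :
    (S + vecMulVec h g) *ᵥ ((1 + g ⬝ᵥ S⁻¹ *ᵥ h)⁻¹ • S⁻¹ *ᵥ h) = h := by
  rw [mulVec_smul, add_mulVec, vecMulVec_mulVec, mulVec_mulVec, mul_nonsing_inv _ hS, one_mulVec,
    op_smul_eq_smul, smul_add, smul_smul, ← add_smul, ← mul_one_add, inv_mul_cancel₀ hs, one_smul]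

end Field

section RCLike

variable {n 𝕜 : Type*} [Fintype n] [RCLike 𝕜]

theorem IsHermitian.re_dotProduct_sub_mulVec_sub {A : Matrix n n 𝕜} (hA : A.IsHermitian)
    {u₀ h : n → 𝕜} (hu₀ : A *ᵥ u₀ = h) (u : n → 𝕜) :
    RCLike.re (star (u - u₀) ⬝ᵥ A *ᵥ (u - u₀)) =
      RCLike.re (star u ⬝ᵥ A *ᵥ u) - 2 * RCLike.re (star u ⬝ᵥ h) + RCLike.re (star u₀ ⬝ᵥ h) := by
  have hcross : star u₀ ⬝ᵥ A *ᵥ u = star (star u ⬝ᵥ h) := by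
    rw [star_dotProduct u₀, star_mulVec, ← dotProduct_mulVec, hA.eq, hu₀]
  rw [mulVec_sub, hu₀, star_sub, dotProduct_sub, sub_dotProduct, sub_dotProduct, hcross]
  simp only [map_sub, RCLike.star_def, RCLike.conj_re]
  ring

theorem PosSemidef.isLeast_re_quadratic_of_mulVec_eq {A : Matrix n n 𝕜} (hA : A.PosSemidef)
    {u₀ h : n → 𝕜} (hu₀ : A *ᵥ u₀ = h) :
    IsLeast (range fun u => RCLike.re (star u ⬝ᵥ A *ᵥ u) - 2 * RCLike.re (star u ⬝ᵥ h) + 1)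
      (1 - RCLike.re (star u₀ ⬝ᵥ h)) := by
  refine ⟨⟨u₀, ?_⟩, ?_⟩
  · have := hA.isHermitian.re_dotProduct_sub_mulVec_sub hu₀ u₀
    simp only [sub_self, star_zero, zero_dotProduct, map_zero] at this
    linarith
  · rintro _ ⟨u, rfl⟩
    have := hA.isHermitian.re_dotProduct_sub_mulVec_sub hu₀ u
    linarith [hA.re_dotProduct_nonneg (u - u₀)]

variable [DecidableEq n]

theorem PosDef.isLeast_re_quadratic_add_vecMulVec {S : Matrix n n 𝕜} (hS : S.PosDef)
    (h : n → 𝕜) :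
    IsLeast (range fun u => RCLike.re (star u ⬝ᵥ (S + vecMulVec h (star h)) *ᵥ u)
        - 2 * RCLike.re (star u ⬝ᵥ h) + 1)
      (1 + RCLike.re (star h ⬝ᵥ S⁻¹ *ᵥ h))⁻¹ := by
  obtain ⟨r, hr⟩ : ∃ r : ℝ, star h ⬝ᵥ S⁻¹ *ᵥ h = r := RCLike.conj_eq_iff_real.1 <|
    RCLike.conj_eq_iff_im.2 (hS.inv.isHermitian.im_star_dotProduct_mulVec_self h)
  have hr₀ : 0 ≤ r := by simpa [hr] using hS.inv.posSemidef.re_dotProduct_nonneg h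
  have hc : (1 + r : 𝕜) ≠ 0 := by exact_mod_cast (by positivity : 1 + r ≠ 0)
  convert (hS.posSemidef.add (posSemidef_vecMulVec_self_star h)).isLeast_re_quadratic_of_mulVec_eq
    (add_vecMulVec_mulVec_smul_inv_mulVec ((isUnit_iff_isUnit_det _).1 hS.isUnit) h (star h)
      (hr ▸ hc)) using 1
  rw [star_smul, smul_dotProduct, star_dotProduct (S⁻¹ *ᵥ h) h, hr]
  simp only [RCLike.star_def, RCLike.conj_ofReal, map_add, map_one, map_inv₀, smul_eq_mul]
  norm_cast
  field_simp
  ring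

end RCLike

end Matrix

/-- variational (WMMSE) characterization of the rate:
log(1 + hᴴΣ_int⁻¹h) is the maximum over u ∈ ℂ^N and ρ > 0 of
log ρ − ρ·e(u) + 1, where e(u) = uᴴ(Σ_int + hhᴴ)u − 2Re{uᴴh} + 1. -/
theorem rate_variational_characterization {N : ℕ}
    (Sint : Matrix (Fin N) (Fin N) ℂ) (hPD : Sint.PosDef) (h : Fin N → ℂ) :
    let e : (Fin N → ℂ) → ℝ := fun u =>
      (star u ⬝ᵥ (Sint + vecMulVec h (star h)).mulVec u).re
        - 2 * (star u ⬝ᵥ h).re + 1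
    IsGreatest {v : ℝ | ∃ (u : Fin N → ℂ) (ρ : ℝ), 0 < ρ ∧
        v = Real.log ρ - ρ * e u + 1}
      (Real.log (1 + (star h ⬝ᵥ Sint⁻¹.mulVec h).re)) := by
  intro e
  have hmmse : IsLeast (range e) (1 + (star h ⬝ᵥ Sint⁻¹ *ᵥ h).re)⁻¹ :=
    hPD.isLeast_re_quadratic_add_vecMulVec h
  have hsinr : 0 < 1 + (star h ⬝ᵥ Sint⁻¹ *ᵥ h).re :=
    add_pos_of_pos_of_nonneg one_pos (hPD.inv.posSemidef.re_dotProduct_nonneg h)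
  simpa only [log_inv, neg_neg] using
    isGreatest_log_sub_mul_add_one_of_isLeast hmmse (inv_pos.2 hsinr)
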